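/- Let u : ℝ² → ℝ² be C² solving -Δu = u·j(1-|u|²) with |u| ≤ 1, ‖∇u‖_∞ = M < ∞, and j continuous with J' = j, J'(t)² ≤ C₀ J(t) on [0,1], and ∫_{ℝ²} J(1-|u|²) dx < ∞. Then there is C > 0 with ∫_{B_R} |∇u|² dx ≤ C·R for all R ≥ 1. -/

import Mathlib

/-!
Test the equation against `u`: the field `F i = ⟪u, ∂ᵢu⟫` has divergence
`|∇u|² - |u|² j(1 - |u|²)`. Integrate over the square `[-R, R]²`, which contains `B_R` and on
which the divergence theorem is available. Since `|F| ≤ |u| ‖Du‖ ≤ M`, the boundary contributes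
at most `8 M R`. For the potential term, `(|u|² j)² ≤ j² ≤ C₀ J(1 - |u|²)`, and AM-GM in the form
`2a ≤ R a² + 1/R` (in place of Cauchy-Schwarz) bounds its integral by
`(R ∫ C₀ J(1 - |u|²) + 4 R) / 2`.
-/

open Real MeasureTheory Filter Set

noncomputable section

abbrev E2 := EuclideanSpace ℝ (Fin 2)

def bvec (i : Fin 2) : E2 := EuclideanSpace.single i 1

def pd (i : Fin 2) (f : E2 → ℝ) (x : E2) : ℝ := fderiv ℝ f x (bvec i)

def lap (f : E2 → ℝ) (x : E2) : ℝ := ∑ i, pd i (fun y => pd i f y) x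

def gradsq (u : E2 → E2) (x : E2) : ℝ := ∑ i, ∑ k, (pd i (fun y => u y k) x)^2

def cpt (R θ : ℝ) : E2 := WithLp.toLp 2 ![R * Real.cos θ, R * Real.sin θ]

def tv (θ : ℝ) : E2 := WithLp.toLp 2 ![-Real.sin θ, Real.cos θ]

def pdv (i : Fin 2) (u : E2 → E2) (x : E2) : E2 := WithLp.toLp 2 (fun k => pd i (fun z => u z k) x)

def wedge (a b : E2) : ℝ := a 0 * b 1 - a 1 * b 0

open scoped RealInnerProductSpace

section Calculus

variable {n : WithTop ℕ∞} {i k : Fin 2} {x : E2} {v : E2 → E2}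

theorem pd_coord (hv : DifferentiableAt ℝ v x) :
    pd i (fun y => v y k) x = fderiv ℝ v x (bvec i) k := by
  have h : (fun y => v y k) = EuclideanSpace.proj k ∘ v := rfl
  rw [pd, h, fderiv_comp x (EuclideanSpace.proj k).differentiableAt hv,
    ContinuousLinearMap.fderiv]
  rfl

theorem pdv_eq_fderiv_apply (hv : DifferentiableAt ℝ v x) :
    pdv i v x = fderiv ℝ v x (bvec i) := by
  ext k
  exact pd_coord hv

theorem contDiff_pd {f : E2 → ℝ} (hf : ContDiff ℝ (n + 1) f) : ContDiff ℝ n (pd i f) :=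
  (hf.fderiv_right le_rfl).clm_apply contDiff_const

theorem contDiff_pdv (hv : ContDiff ℝ (n + 1) v) : ContDiff ℝ n (pdv i v) := by
  have h : pdv i v = fun x => fderiv ℝ v x (bvec i) :=
    funext fun x => pdv_eq_fderiv_apply (hv.differentiable (by simp) x)
  rw [h]
  exact (hv.fderiv_right le_rfl).clm_apply contDiff_const

end Calculus

theorem gradsq_eq_sum_norm_pdv_sq (u : E2 → E2) (x : E2) :
    gradsq u x = ∑ i, ‖pdv i u x‖ ^ 2 := by
  simp [gradsq, pdv, EuclideanSpace.real_norm_sq_eq]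

theorem gradsq_nonneg (u : E2 → E2) (x : E2) : 0 ≤ gradsq u x := by
  rw [gradsq_eq_sum_norm_pdv_sq]
  positivity

theorem continuous_gradsq {u : E2 → E2} (hu : ContDiff ℝ 1 u) :
    Continuous (gradsq u) := by
  simp_rw [funext (gradsq_eq_sum_norm_pdv_sq u)]
  exact continuous_finsetSum _ fun i _ => (contDiff_pdv (n := 0) hu).continuous.norm.pow 2

theorem volume_real_Icc_const {ι : Type*} [Fintype ι] {a b : ℝ} (hab : a ≤ b) :
    volume.real (Icc (fun _ : ι => a) (fun _ => b)) = (b - a) ^ Fintype.card ι := by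
  rw [measureReal_def, Real.volume_Icc_pi, Finset.prod_const, ENNReal.toReal_pow,
    ENNReal.toReal_ofReal (sub_nonneg.2 hab), Finset.card_univ]

theorem abs_setIntegral_Icc_const_le {ι : Type*} [Fintype ι] {f : (ι → ℝ) → ℝ} {M R : ℝ}
    (hR : 0 ≤ R) (hf : ∀ y, |f y| ≤ M) :
    |∫ y in Icc (fun _ : ι => -R) (fun _ => R), f y| ≤ M * (2 * R) ^ Fintype.card ι := by
  have hvol := volume_real_Icc_const (ι := ι) (neg_le_self hR)
  rw [sub_neg_eq_add, ← two_mul] at hvol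
  rw [← hvol]
  exact norm_setIntegral_le_of_norm_le_const measure_Icc_lt_top fun y _ =>
    (Real.norm_eq_abs _).trans_le (hf y)

def square (R : ℝ) : Set E2 := WithLp.ofLp ⁻¹' Icc (fun _ => -R) (fun _ => R)

theorem volume_real_square {R : ℝ} (hR : 0 ≤ R) : volume.real (square R) = (2 * R) ^ 2 := by
  rw [square, (PiLp.volume_preserving_ofLp _).measureReal_preimage
    measurableSet_Icc.nullMeasurableSet, volume_real_Icc_const (by linarith)]
  simp only [Fintype.card_fin]
  ring

theorem isCompact_square (R : ℝ) : IsCompact (square R) :=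
  (PiLp.continuousLinearEquiv 2 ℝ fun _ : Fin 2 => ℝ).toHomeomorph.isCompact_preimage.2
    isCompact_Icc

theorem ball_subset_square (R : ℝ) : Metric.ball (0 : E2) R ⊆ square R := by
  intro x hx
  have h i : |x i| ≤ R := (PiLp.norm_apply_le x i).trans (mem_ball_zero_iff.1 hx).le
  exact ⟨fun i => neg_le_of_abs_le (h i), fun i => le_of_abs_le (h i)⟩

theorem setIntegral_ball_le_setIntegral_square {f : E2 → ℝ} (hf : Continuous f)
    (hf0 : ∀ x, 0 ≤ f x) (R : ℝ) :
    ∫ x in Metric.ball (0 : E2) R, f x ≤ ∫ x in square R, f x :=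
  setIntegral_mono_set (hf.continuousOn.integrableOn_compact (isCompact_square R))
    (Eventually.of_forall hf0) (ball_subset_square R).eventuallyLE

theorem integral_square_sum_pd_le {F : Fin 2 → E2 → ℝ} (hF : ∀ i, ContDiff ℝ 1 (F i))
    {M R : ℝ} (hFM : ∀ i x, |F i x| ≤ M) (hR : 0 ≤ R) :
    ∫ x in square R, ∑ i, pd i (F i) x ≤ 8 * M * R := by
  set e := (PiLp.continuousLinearEquiv 2 ℝ fun _ : Fin 2 => ℝ).symm
  have hcont i : Continuous (pd i (F i)) := (contDiff_pd (n := 0) (hF i)).continuous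
  have hdiv := integral_divergence_of_hasFDerivAt_off_countable' (fun _ => -R) (fun _ => R)
    (fun _ => neg_le_self hR) (fun i y => F i (e y))
    (fun i y => (fderiv ℝ (F i) (e y)).comp (e : (Fin 2 → ℝ) →L[ℝ] E2)) ∅ countable_empty
    (fun i => ((hF i).continuous.comp e.continuous).continuousOn)
    (fun y _ i => ((hF i).differentiable one_ne_zero (e y)).hasFDerivAt.comp y e.hasFDerivAt)
    ((continuous_finsetSum _ fun i _ => (hcont i).comp e.continuous).continuousOn
      |>.integrableOn_compact isCompact_Icc)
  have hface i t : |∫ y in Icc ((fun _ => -R) ∘ i.succAbove) ((fun _ => R) ∘ i.succAbove),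
      F i (e (i.insertNth t y))| ≤ M * (2 * R) := by
    have h := abs_setIntegral_Icc_const_le (ι := Fin 1) hR fun y => hFM i (e (i.insertNth t y))
    rwa [Fintype.card_fin, pow_one] at h
  calc ∫ x in square R, ∑ i, pd i (F i) x
      = ∫ y in Icc (fun _ => -R) (fun _ => R), ∑ i, pd i (F i) (e y) :=
        (PiLp.volume_preserving_ofLp _).setIntegral_preimage_emb
          (MeasurableEquiv.toLp 2 (Fin 2 → ℝ)).symm.measurableEmbedding
          (fun y => ∑ i, pd i (F i) (e y)) _
    _ = _ := hdiv
    _ ≤ ∑ _i : Fin 2, (M * (2 * R) + M * (2 * R)) := by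
      gcongr with i
      linarith [abs_le.1 (hface i R), abs_le.1 (hface i (-R))]
    _ = 8 * M * R := by simp; ring

def flux (u : E2 → E2) (i : Fin 2) (x : E2) : ℝ := ⟪u x, pdv i u x⟫

section Flux

variable {u : E2 → E2} {x : E2}

theorem contDiff_flux (hu : ContDiff ℝ 2 u) (i : Fin 2) : ContDiff ℝ 1 (flux u i) :=
  (hu.of_le one_le_two).inner ℝ (contDiff_pdv (n := 1) hu)

theorem abs_flux_le {i : Fin 2} (hu : DifferentiableAt ℝ u x) :
    |flux u i x| ≤ ‖u x‖ * ‖fderiv ℝ u x‖ := by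
  rw [flux, pdv_eq_fderiv_apply hu]
  calc |⟪u x, fderiv ℝ u x (bvec i)⟫| ≤ ‖u x‖ * ‖fderiv ℝ u x (bvec i)‖ :=
        abs_real_inner_le_norm _ _
    _ ≤ ‖u x‖ * ‖fderiv ℝ u x‖ := by
        gcongr
        simpa [bvec] using (fderiv ℝ u x).le_opNorm (bvec i)

theorem pd_flux (hu : ContDiff ℝ 2 u) (i : Fin 2) :
    pd i (flux u i) x = ⟪u x, pdv i (pdv i u) x⟫ + ‖pdv i u x‖ ^ 2 := by
  have hpdv : Differentiable ℝ (pdv i u) := (contDiff_pdv (n := 1) hu).differentiable one_ne_zero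
  have hu' : Differentiable ℝ u := hu.differentiable two_ne_zero
  change fderiv ℝ (fun t => ⟪u t, pdv i u t⟫) x (bvec i) = _
  rw [fderiv_inner_apply ℝ (hu' x) (hpdv x), ← pdv_eq_fderiv_apply (hpdv x),
    ← pdv_eq_fderiv_apply (hu' x), real_inner_self_eq_norm_sq]

theorem sum_pd_flux (hu : ContDiff ℝ 2 u) :
    ∑ i, pd i (flux u i) x = gradsq u x + ∑ k, u x k * lap (fun y => u y k) x := by
  simp only [pd_flux hu, Finset.sum_add_distrib, gradsq_eq_sum_norm_pdv_sq, PiLp.inner_apply]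
  simp [pdv, lap, Fin.sum_univ_two]
  ring

theorem gradsq_sub_sum_pd_flux (hu : ContDiff ℝ 2 u) {c : ℝ}
    (hpde : ∀ k, -(lap (fun y => u y k) x) = u x k * c) :
    gradsq u x - ∑ i, pd i (flux u i) x = ‖u x‖ ^ 2 * c := by
  rw [sum_pd_flux hu, EuclideanSpace.real_norm_sq_eq, Finset.sum_mul, sub_add_cancel_left,
    ← Finset.sum_neg_distrib]
  refine Finset.sum_congr rfl fun k _ => ?_
  rw [← mul_neg, hpde k]
  ring

theorem sq_gradsq_sub_sum_pd_flux_le (hu : ContDiff ℝ 2 u) {j J : ℝ → ℝ} {C₀ : ℝ}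
    (hpde : ∀ k, -(lap (fun y => u y k) x) = u x k * j (1 - ‖u x‖ ^ 2)) (hux : ‖u x‖ ≤ 1)
    (hC₀ : ∀ t ∈ Icc (0 : ℝ) 1, j t ^ 2 ≤ C₀ * J t) :
    (gradsq u x - ∑ i, pd i (flux u i) x) ^ 2 ≤ C₀ * J (1 - ‖u x‖ ^ 2) := by
  rw [gradsq_sub_sum_pd_flux hu hpde]
  have hsq : ‖u x‖ ^ 2 ≤ 1 := pow_le_one₀ (norm_nonneg _) hux
  calc (‖u x‖ ^ 2 * j (1 - ‖u x‖ ^ 2)) ^ 2 ≤ j (1 - ‖u x‖ ^ 2) ^ 2 := by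
        rw [mul_pow]
        exact mul_le_of_le_one_left (sq_nonneg _) (pow_le_one₀ (by positivity) hsq)
    _ ≤ C₀ * J (1 - ‖u x‖ ^ 2) := hC₀ _ ⟨by linarith, by linarith [sq_nonneg ‖u x‖]⟩

end Flux

theorem two_mul_setIntegral_le_of_sq_le {α : Type*} [MeasurableSpace α] {μ : Measure α}
    {s : Set α} {f g : α → ℝ} (hs : MeasurableSet s) (hμs : μ s ≠ ⊤) (hf : IntegrableOn f s μ)
    (hg : IntegrableOn g s μ) (hfg : ∀ x ∈ s, f x ^ 2 ≤ g x) {R : ℝ} (hR : 0 < R) :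
    2 * ∫ x in s, f x ∂μ ≤ R * ∫ x in s, g x ∂μ + R⁻¹ * μ.real s := by
  have hpt : ∀ x ∈ s, 2 * f x ≤ R * g x + R⁻¹ := fun x hx => by
    have hsq : R * (f x - R⁻¹) ^ 2 = R * f x ^ 2 - 2 * f x + R⁻¹ := by field_simp; ring
    nlinarith [mul_le_mul_of_nonneg_left (hfg x hx) hR.le, sq_nonneg (f x - R⁻¹)]
  calc 2 * ∫ x in s, f x ∂μ = ∫ x in s, 2 * f x ∂μ := (integral_const_mul _ _).symm
    _ ≤ ∫ x in s, (R * g x + R⁻¹) ∂μ :=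
      setIntegral_mono_on (hf.const_mul 2) ((hg.const_mul R).add (integrableOn_const hμs)) hs hpt
    _ = R * ∫ x in s, g x ∂μ + R⁻¹ * μ.real s := by
      rw [integral_add (hg.const_mul R) (integrableOn_const hμs), integral_const_mul,
        setIntegral_const, smul_eq_mul, mul_comm (μ.real s)]

theorem integral_square_gradsq_le {u : E2 → E2} (hu : ContDiff ℝ 2 u) {M : ℝ}
    (hflux : ∀ i x, |flux u i x| ≤ M) {g : E2 → ℝ} (hg : Integrable g)
    (hpot : ∀ x, (gradsq u x - ∑ i, pd i (flux u i) x) ^ 2 ≤ g x) {R : ℝ} (hR : 0 < R) :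
    ∫ x in square R, gradsq u x ≤ 8 * M * R + (R * (∫ x, g x) + R⁻¹ * (2 * R) ^ 2) / 2 := by
  have hQ := isCompact_square R
  have hdiv : Continuous fun x => ∑ i, pd i (flux u i) x := continuous_finsetSum _ fun i _ =>
    (contDiff_pd (n := 0) (contDiff_flux hu i)).continuous
  have hrest : IntegrableOn (fun x => gradsq u x - ∑ i, pd i (flux u i) x) (square R) :=
    ((continuous_gradsq (hu.of_le one_le_two)).sub hdiv).continuousOn.integrableOn_compact hQ
  have hdivR := integral_square_sum_pd_le (contDiff_flux hu) hflux hR.le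
  have hrestR : 2 * ∫ x in square R, (gradsq u x - ∑ i, pd i (flux u i) x) ≤
      R * (∫ x in square R, g x) + R⁻¹ * (2 * R) ^ 2 := by
    rw [← volume_real_square hR.le]
    exact two_mul_setIntegral_le_of_sq_le hQ.measurableSet hQ.measure_lt_top.ne hrest
      hg.integrableOn (fun x _ => hpot x) hR
  have hgR : ∫ x in square R, g x ≤ ∫ x, g x :=
    setIntegral_le_integral hg (Eventually.of_forall fun x => (sq_nonneg _).trans (hpot x))
  calc ∫ x in square R, gradsq u x
      = (∫ x in square R, ∑ i, pd i (flux u i) x) +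
          ∫ x in square R, (gradsq u x - ∑ i, pd i (flux u i) x) := by
        rw [← integral_add (hdiv.continuousOn.integrableOn_compact hQ) hrest]
        simp
    _ ≤ 8 * M * R + (R * (∫ x, g x) + R⁻¹ * (2 * R) ^ 2) / 2 := by
        linarith [mul_le_mul_of_nonneg_left hgR hR.le]

theorem stmt17_general (u : E2 → E2) (hu : ContDiff ℝ 2 u) (j J : ℝ → ℝ)
    (hpde : ∀ x, ∀ k, -(lap (fun y => u y k) x) = u x k * j (1 - ‖u x‖ ^ 2))
    (hub : ∀ x, ‖u x‖ ≤ 1)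
    (M : ℝ) (hM : ∀ x, ‖fderiv ℝ u x‖ ≤ M)
    (C₀ : ℝ) (hC₀ : ∀ t ∈ Icc (0:ℝ) 1, (j t) ^ 2 ≤ C₀ * J t)
    (hint : Integrable (fun x => J (1 - ‖u x‖ ^ 2))) :
    ∃ C > 0, ∀ R ≥ (1:ℝ), ∫ x in Metric.ball (0 : E2) R, gradsq u x ≤ C * R := by
  have hpot x := sq_gradsq_sub_sum_pd_flux_le hu (hpde x) (hub x) hC₀
  have hflux i x : |flux u i x| ≤ M := (abs_flux_le (hu.differentiable two_ne_zero x)).trans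
    (by simpa using mul_le_mul (hub x) (hM x) (norm_nonneg _) zero_le_one)
  set A := ∫ x, C₀ * J (1 - ‖u x‖ ^ 2)
  have hA : 0 ≤ A := integral_nonneg fun x => (sq_nonneg _).trans (hpot x)
  have hM0 : 0 ≤ M := (norm_nonneg _).trans (hM 0)
  refine ⟨8 * M + A / 2 + 2, by positivity, fun R hR => ?_⟩
  have hR0 : 0 < R := by linarith
  calc ∫ x in Metric.ball (0 : E2) R, gradsq u x ≤ ∫ x in square R, gradsq u x :=
        setIntegral_ball_le_setIntegral_square (continuous_gradsq (hu.of_le one_le_two))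
          (gradsq_nonneg u) R
    _ ≤ 8 * M * R + (R * A + R⁻¹ * (2 * R) ^ 2) / 2 :=
        integral_square_gradsq_le hu hflux (hint.const_mul C₀) hpot hR0
    _ = (8 * M + A / 2 + 2) * R := by field_simp; ring

theorem stmt17 (u : E2 → E2) (hu : ContDiff ℝ 2 u) (j J : ℝ → ℝ) (hj : Continuous j)
    (hJ : ∀ t, HasDerivAt J (j t) t)
    (hpde : ∀ x, ∀ k, -(lap (fun y => u y k) x) = u x k * j (1 - ‖u x‖ ^ 2))
    (hub : ∀ x, ‖u x‖ ≤ 1)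
    (M : ℝ) (hM : ∀ x, ‖fderiv ℝ u x‖ ≤ M)
    (C₀ : ℝ) (hC₀ : ∀ t ∈ Icc (0:ℝ) 1, (j t) ^ 2 ≤ C₀ * J t)
    (hint : Integrable (fun x => J (1 - ‖u x‖ ^ 2))) :
    ∃ C > 0, ∀ R ≥ (1:ℝ), ∫ x in Metric.ball (0 : E2) R, gradsq u x ≤ C * R :=
  stmt17_general u hu j J hpde hub M hM C₀ hC₀ hint
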